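/- arXiv:math/0404533 — 6 statements merged into one kernel-verified Lean document; each statement's English description precedes it below -/
import Mathlib

section
/- If f : [0,1] → ℝ² is a continuous surjection onto the unit square [0,1]² whose square-to-linear ratio |f(t)-f(t')|²/|t-t'| is bounded by 3.5 for all t ≠ t', then a contradiction follows; equivalently, every continuous surjection from [0,1] onto [0,1]² has square-to-linear ratio at least 3.5 at some pair of points. -/
open Set

set_option maxHeartbeats 1000000

/-- The unit square `[0,1]²` in the Euclidean plane. -/
def unitSquare : Set (EuclideanSpace ℝ (Fin 2)) :=
  {p | p 0 ∈ Icc (0:ℝ) 1 ∧ p 1 ∈ Icc (0:ℝ) 1}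

private lemma sqrt_sum_contra {A B : ℝ} (hA0 : 0 ≤ A) (hB0 : 0 ≤ B)
    (hAB : A + B < 1/2) (h : 1 < Real.sqrt A + Real.sqrt B) : False := by
  have ha2 : Real.sqrt A ^ 2 = A := Real.sq_sqrt hA0
  have hb2 : Real.sqrt B ^ 2 = B := Real.sq_sqrt hB0
  have ha0 : 0 ≤ Real.sqrt A := Real.sqrt_nonneg _
  have hb0 : 0 ≤ Real.sqrt B := Real.sqrt_nonneg _
  nlinarith [sq_nonneg (Real.sqrt A - Real.sqrt B),
    mul_pos (show (0:ℝ) < Real.sqrt A + Real.sqrt B - 1 by linarith)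
      (show (0:ℝ) < Real.sqrt A + Real.sqrt B + 1 by linarith)]

/-- Core case: corners visited in the cyclic order (0,0), (0,1), (1,1), (1,0). -/
private lemma stl_core (X Y : ℝ → ℝ)
    (H : ∀ s ∈ Icc (0:ℝ) 1, ∀ t ∈ Icc (0:ℝ) 1, s < t →
      (X s - X t)^2 + (Y s - Y t)^2 < 7/2 * (t - s))
    (S : ∀ x ∈ Icc (0:ℝ) 1, ∀ y ∈ Icc (0:ℝ) 1, ∃ t ∈ Icc (0:ℝ) 1, X t = x ∧ Y t = y)
    (p v u q : ℝ)
    (hp : p ∈ Icc (0:ℝ) 1) (hv : v ∈ Icc (0:ℝ) 1)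
    (hu : u ∈ Icc (0:ℝ) 1) (hq : q ∈ Icc (0:ℝ) 1)
    (opv : p < v) (ovu : v < u) (ouq : u < q)
    (hXp : X p = 0) (hYp : Y p = 0) (hXv : X v = 0) (hYv : Y v = 1)
    (hXu : X u = 1) (hYu : Y u = 1) (hXq : X q = 1) (hYq : Y q = 0) : False := by
  have g1 : (1:ℝ) < 7/2 * (v - p) := by
    have h := H p hp v hv opv; rw [hXp, hXv, hYp, hYv] at h; linarith [h]
  have g2 : (1:ℝ) < 7/2 * (u - v) := by
    have h := H v hv u hu ovu; rw [hXv, hXu, hYv, hYu] at h; linarith [h]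
  have g3 : (1:ℝ) < 7/2 * (q - u) := by
    have h := H u hu q hq ouq; rw [hXu, hXq, hYu, hYq] at h; linarith [h]
  have hABlt : 7/2 * p + 7/2 * (1 - q) < 1/2 := by linarith
  obtain ⟨m, hm, hXm, hYm⟩ := S (1/2) (by norm_num) 0 (by norm_num)
  rcases lt_trichotomy m p with hmp | hmp | hmp
  · -- m < p : the "A-side", with A := 7/2 * p > 1/4
    have hA : (1:ℝ)/4 < 7/2 * p := by
      have h := H m hm p hp hmp; rw [hXm, hXp, hYm, hYp] at h
      linarith [h, hm.1]
    have hA0 : (0:ℝ) ≤ 7/2 * p := by linarith [hp.1]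
    set a := Real.sqrt (7/2 * p) with hadef
    have ha2 : a ^ 2 = 7/2 * p := Real.sq_sqrt hA0
    have ha0 : 0 ≤ a := Real.sqrt_nonneg _
    have hahalf : 1/2 < a := by nlinarith [ha2, hA, ha0]
    have ha1 : a < 1 := by nlinarith [ha2, ha0, hABlt, hq.2]
    obtain ⟨z, hz, hXz, hYz⟩ := S a ⟨by linarith, by linarith⟩ 0 (by norm_num)
    rcases lt_trichotomy z p with hzp | hzp | hzp
    · have h := H z hz p hp hzp; rw [hXz, hXp, hYz, hYp] at h
      have d : a^2 < 7/2 * (p - z) := by linarith [h]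
      linarith [d, hz.1, ha2]
    · rw [hzp, hXp] at hXz; linarith
    · rcases lt_trichotomy z v with hzv | hzv | hzv
      · have c1 := H p hp z hz hzp; rw [hXp, hXz, hYp, hYz] at c1
        have c2 := H z hz v hv hzv; rw [hXz, hXv, hYz, hYv] at c2
        have d1 : a^2 < 7/2 * (z - p) := by linarith [c1]
        have d2 : a^2 + 1 < 7/2 * (v - z) := by linarith [c2]
        linarith [d1, d2, g2, g3, hA, ha2, hp.1, hq.2]
      · rw [hzv, hXv] at hXz; linarith
      · rcases lt_trichotomy z u with hzu | hzu | hzu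
        · have c2 := H v hv z hz hzv; rw [hXv, hXz, hYv, hYz] at c2
          have c3 := H z hz u hu hzu; rw [hXz, hXu, hYz, hYu] at c3
          have d2 : a^2 + 1 < 7/2 * (z - v) := by linarith [c2]
          have d3 : a^2 - 2*a + 2 < 7/2 * (u - z) := by linarith [c3]
          have key : 2*a^2 - 2*a + 1/2 ≥ 0 := by nlinarith [sq_nonneg (a - 1/2)]
          linarith [g1, d2, d3, g3, hp.1, hq.2, key]
        · rw [hzu, hXu] at hXz; linarith
        · rcases lt_trichotomy z q with hzq | hzq | hzq
          · have c3 := H u hu z hz hzu; rw [hXu, hXz, hYu, hYz] at c3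
            have c4 := H z hz q hq hzq; rw [hXz, hXq, hYz, hYq] at c4
            have d3 : a^2 - 2*a + 2 < 7/2 * (z - u) := by linarith [c3]
            have d4 : a^2 - 2*a + 1 < 7/2 * (q - z) := by linarith [c4]
            have key : 3*a^2 - 4*a + 4/3 ≥ 0 := by nlinarith [sq_nonneg (a - 2/3)]
            linarith [g1, g2, d3, d4, ha2, hq.2, key]
          · rw [hzq, hXq] at hXz; linarith
          · -- z > q
            have h := H q hq z hz hzq; rw [hXq, hXz, hYq, hYz] at h
            have hB0 : (0:ℝ) ≤ 7/2 * (1 - q) := by linarith [hq.2]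
            have hb2 : Real.sqrt (7/2 * (1 - q)) ^ 2 = 7/2 * (1 - q) :=
              Real.sq_sqrt hB0
            have h1a : (1 - a)^2 < Real.sqrt (7/2 * (1 - q)) ^ 2 := by
              rw [hb2]; linarith [h, hz.2]
            have h1ab : 1 - a < Real.sqrt (7/2 * (1 - q)) :=
              lt_of_pow_lt_pow_left₀ 2 (Real.sqrt_nonneg _) h1a
            exact sqrt_sum_contra hA0 hB0 hABlt (by rw [← hadef]; linarith)
  · rw [hmp, hXp] at hXm; norm_num at hXm
  · rcases lt_trichotomy m v with hmv | hmv | hmv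
    · have c1 := H p hp m hm hmp; rw [hXp, hXm, hYp, hYm] at c1
      have c2 := H m hm v hv hmv; rw [hXm, hXv, hYm, hYv] at c2
      linarith [c1, c2, g2, g3, hp.1, hq.2]
    · rw [hmv, hXv] at hXm; norm_num at hXm
    · rcases lt_trichotomy m u with hmu | hmu | hmu
      · have c2 := H v hv m hm hmv; rw [hXv, hXm, hYv, hYm] at c2
        have c3 := H m hm u hu hmu; rw [hXm, hXu, hYm, hYu] at c3
        linarith [c2, c3, g1, g3, hp.1, hq.2]
      · rw [hmu, hXu] at hXm; norm_num at hXm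
      · rcases lt_trichotomy m q with hmq | hmq | hmq
        · have c3 := H u hu m hm hmu; rw [hXu, hXm, hYu, hYm] at c3
          have c4 := H m hm q hq hmq; rw [hXm, hXq, hYm, hYq] at c4
          linarith [c3, c4, g1, g2, hp.1, hq.2]
        · rw [hmq, hXq] at hXm; norm_num at hXm
        · -- m > q : the "B-side", with B := 7/2 * (1-q) > 1/4
          have hB : (1:ℝ)/4 < 7/2 * (1 - q) := by
            have h := H q hq m hm hmq; rw [hXq, hXm, hYq, hYm] at h
            linarith [h, hm.2]
          have hB0 : (0:ℝ) ≤ 7/2 * (1 - q) := by linarith [hq.2]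
          set b := Real.sqrt (7/2 * (1 - q)) with hbdef
          have hb2 : b ^ 2 = 7/2 * (1 - q) := Real.sq_sqrt hB0
          have hb0 : 0 ≤ b := Real.sqrt_nonneg _
          have hbhalf : 1/2 < b := by nlinarith [hb2, hB, hb0]
          have hb1 : b < 1 := by nlinarith [hb2, hb0, hABlt, hp.1]
          obtain ⟨z, hz, hXz, hYz⟩ := S (1 - b) ⟨by linarith, by linarith⟩ 0 (by norm_num)
          rcases lt_trichotomy z p with hzp | hzp | hzp
          · have h := H z hz p hp hzp; rw [hXz, hXp, hYz, hYp] at h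
            have hA0 : (0:ℝ) ≤ 7/2 * p := by linarith [hp.1]
            have ha2 : Real.sqrt (7/2 * p) ^ 2 = 7/2 * p := Real.sq_sqrt hA0
            have h1a : (1 - b)^2 < Real.sqrt (7/2 * p) ^ 2 := by
              rw [ha2]; linarith [h, hz.1]
            have h1ab : 1 - b < Real.sqrt (7/2 * p) :=
              lt_of_pow_lt_pow_left₀ 2 (Real.sqrt_nonneg _) h1a
            exact sqrt_sum_contra hA0 hB0 hABlt (by rw [← hbdef]; linarith)
          · rw [hzp, hXp] at hXz; linarith
          · rcases lt_trichotomy z v with hzv | hzv | hzv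
            · have c1 := H p hp z hz hzp; rw [hXp, hXz, hYp, hYz] at c1
              have c2 := H z hz v hv hzv; rw [hXz, hXv, hYz, hYv] at c2
              have d1 : b^2 - 2*b + 1 < 7/2 * (z - p) := by linarith [c1]
              have d2 : b^2 - 2*b + 2 < 7/2 * (v - z) := by linarith [c2]
              have key : 3*b^2 - 4*b + 4/3 ≥ 0 := by nlinarith [sq_nonneg (b - 2/3)]
              linarith [d1, d2, g2, g3, hb2, hp.1, key]
            · rw [hzv, hXv] at hXz; linarith
            · rcases lt_trichotomy z u with hzu | hzu | hzu
              · have c2 := H v hv z hz hzv; rw [hXv, hXz, hYv, hYz] at c2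
                have c3 := H z hz u hu hzu; rw [hXz, hXu, hYz, hYu] at c3
                have d2 : b^2 - 2*b + 2 < 7/2 * (z - v) := by linarith [c2]
                have d3 : b^2 + 1 < 7/2 * (u - z) := by linarith [c3]
                have key : 2*b^2 - 2*b + 1/2 ≥ 0 := by nlinarith [sq_nonneg (b - 1/2)]
                linarith [g1, d2, d3, g3, hp.1, hq.2, key]
              · rw [hzu, hXu] at hXz; linarith
              · rcases lt_trichotomy z q with hzq | hzq | hzq
                · have c3 := H u hu z hz hzu; rw [hXu, hXz, hYu, hYz] at c3
                  have c4 := H z hz q hq hzq; rw [hXz, hXq, hYz, hYq] at c4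
                  have d3 : b^2 + 1 < 7/2 * (z - u) := by linarith [c3]
                  have d4 : b^2 < 7/2 * (q - z) := by linarith [c4]
                  linarith [g1, g2, d3, d4, hp.1, hq.2, hB, hb2]
                · rw [hzq, hXq] at hXz; linarith
                · have h := H q hq z hz hzq; rw [hXq, hXz, hYq, hYz] at h
                  have d : b^2 < 7/2 * (z - q) := by linarith [h]
                  linarith [d, hz.2, hb2]
/-- Case where the minimum of the four corner times is at the corner (0,0). -/
private lemma stl_min (X Y : ℝ → ℝ)
    (H : ∀ s ∈ Icc (0:ℝ) 1, ∀ t ∈ Icc (0:ℝ) 1, s < t →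
      (X s - X t)^2 + (Y s - Y t)^2 < 7/2 * (t - s))
    (S : ∀ x ∈ Icc (0:ℝ) 1, ∀ y ∈ Icc (0:ℝ) 1, ∃ t ∈ Icc (0:ℝ) 1, X t = x ∧ Y t = y)
    (ta tb tc td : ℝ)
    (hta : ta ∈ Icc (0:ℝ) 1) (htb : tb ∈ Icc (0:ℝ) 1)
    (htc : tc ∈ Icc (0:ℝ) 1) (htd : td ∈ Icc (0:ℝ) 1)
    (hA0 : X ta = 0) (hA1 : Y ta = 0) (hB0 : X tb = 1) (hB1 : Y tb = 0)
    (hC0 : X tc = 1) (hC1 : Y tc = 1) (hD0 : X td = 0) (hD1 : Y td = 1)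
    (h1 : ta < tb) (h2 : ta < tc) (h3 : ta < td) : False := by
  have H' : ∀ s ∈ Icc (0:ℝ) 1, ∀ t ∈ Icc (0:ℝ) 1, s < t →
      (Y s - Y t)^2 + (X s - X t)^2 < 7/2 * (t - s) := by
    intro s hs t ht hst
    have h := H s hs t ht hst; linarith [h]
  have S' : ∀ x ∈ Icc (0:ℝ) 1, ∀ y ∈ Icc (0:ℝ) 1,
      ∃ t ∈ Icc (0:ℝ) 1, Y t = x ∧ X t = y := by
    intro x hx y hy
    obtain ⟨t, ht, e1, e2⟩ := S y hy x hx
    exact ⟨t, ht, e2, e1⟩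
  rcases lt_trichotomy tb tc with h4 | h4 | h4
  · rcases lt_trichotomy tc td with h5 | h5 | h5
    · -- ta < tb < tc < td : order A, B, C, D : swap coordinates
      exact stl_core Y X H' S' ta tb tc td hta htb htc htd h1 h4 h5
        hA1 hA0 hB1 hB0 hC1 hC0 hD1 hD0
    · rw [h5, hD0] at hC0; norm_num at hC0
    · rcases lt_trichotomy tb td with h6 | h6 | h6
      · -- ta < tb < td < tc : order A, B, D, C : chain 1 + 2 + 1 = 4
        have c1 := H ta hta tb htb h1; rw [hA0, hB0, hA1, hB1] at c1
        have c2 := H tb htb td htd h6; rw [hB0, hD0, hB1, hD1] at c2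
        have c3 := H td htd tc htc h5; rw [hD0, hC0, hD1, hC1] at c3
        linarith [c1, c2, c3, hta.1, htc.2]
      · rw [h6, hD0] at hB0; norm_num at hB0
      · -- ta < td < tb < tc : order A, D, B, C : chain 1 + 2 + 1 = 4
        have c1 := H ta hta td htd h3; rw [hA0, hD0, hA1, hD1] at c1
        have c2 := H td htd tb htb h6; rw [hD0, hB0, hD1, hB1] at c2
        have c3 := H tb htb tc htc h4; rw [hB0, hC0, hB1, hC1] at c3
        linarith [c1, c2, c3, hta.1, htc.2]
  · rw [h4, hC1] at hB1; norm_num at hB1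
  · rcases lt_trichotomy tb td with h5 | h5 | h5
    · -- ta < tc < tb < td : order A, C, B, D : chain 2 + 1 + 2 = 5
      have c1 := H ta hta tc htc h2; rw [hA0, hC0, hA1, hC1] at c1
      have c2 := H tc htc tb htb h4; rw [hC0, hB0, hC1, hB1] at c2
      have c3 := H tb htb td htd h5; rw [hB0, hD0, hB1, hD1] at c3
      linarith [c1, c2, c3, hta.1, htd.2]
    · rw [h5, hD0] at hB0; norm_num at hB0
    · rcases lt_trichotomy tc td with h6 | h6 | h6
      · -- ta < tc < td < tb : order A, C, D, B : chain 2 + 1 + 2 = 5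
        have c1 := H ta hta tc htc h2; rw [hA0, hC0, hA1, hC1] at c1
        have c2 := H tc htc td htd h6; rw [hC0, hD0, hC1, hD1] at c2
        have c3 := H td htd tb htb h5; rw [hD0, hB0, hD1, hB1] at c3
        linarith [c1, c2, c3, hta.1, htb.2]
      · rw [h6, hD0] at hC0; norm_num at hC0
      · -- ta < td < tc < tb : order A, D, C, B : the core case
        exact stl_core X Y H S ta td tc tb hta htd htc htb h3 h6 h4
          hA0 hA1 hD0 hD1 hC0 hC1 hB0 hB1

/-- Main combinatorial lemma: no coordinate pair of functions can satisfy both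
the strict square-to-linear bound 7/2 and surjectivity onto the unit square. -/
private lemma stl_main (X Y : ℝ → ℝ)
    (H : ∀ s ∈ Icc (0:ℝ) 1, ∀ t ∈ Icc (0:ℝ) 1, s < t →
      (X s - X t)^2 + (Y s - Y t)^2 < 7/2 * (t - s))
    (S : ∀ x ∈ Icc (0:ℝ) 1, ∀ y ∈ Icc (0:ℝ) 1, ∃ t ∈ Icc (0:ℝ) 1, X t = x ∧ Y t = y) :
    False := by
  obtain ⟨ta, hta, hA0, hA1⟩ := S 0 (by norm_num) 0 (by norm_num)
  obtain ⟨tb, htb, hB0, hB1⟩ := S 1 (by norm_num) 0 (by norm_num)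
  obtain ⟨tc, htc, hC0, hC1⟩ := S 1 (by norm_num) 1 (by norm_num)
  obtain ⟨td, htd, hD0, hD1⟩ := S 0 (by norm_num) 1 (by norm_num)
  -- flipped data, for reduction to the case where the earliest corner is (0,0)
  have Hx : ∀ s ∈ Icc (0:ℝ) 1, ∀ t ∈ Icc (0:ℝ) 1, s < t →
      ((1 - X s) - (1 - X t))^2 + (Y s - Y t)^2 < 7/2 * (t - s) := by
    intro s hs t ht hst; have h := H s hs t ht hst; nlinarith [h]
  have Hy : ∀ s ∈ Icc (0:ℝ) 1, ∀ t ∈ Icc (0:ℝ) 1, s < t →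
      (X s - X t)^2 + ((1 - Y s) - (1 - Y t))^2 < 7/2 * (t - s) := by
    intro s hs t ht hst; have h := H s hs t ht hst; nlinarith [h]
  have Hxy : ∀ s ∈ Icc (0:ℝ) 1, ∀ t ∈ Icc (0:ℝ) 1, s < t →
      ((1 - X s) - (1 - X t))^2 + ((1 - Y s) - (1 - Y t))^2 < 7/2 * (t - s) := by
    intro s hs t ht hst; have h := H s hs t ht hst; nlinarith [h]
  have Sx : ∀ x ∈ Icc (0:ℝ) 1, ∀ y ∈ Icc (0:ℝ) 1,
      ∃ t ∈ Icc (0:ℝ) 1, 1 - X t = x ∧ Y t = y := by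
    intro x hx y hy
    obtain ⟨t, ht, e1, e2⟩ := S (1 - x) ⟨by linarith [hx.2], by linarith [hx.1]⟩ y hy
    exact ⟨t, ht, by rw [e1]; ring, e2⟩
  have Sy : ∀ x ∈ Icc (0:ℝ) 1, ∀ y ∈ Icc (0:ℝ) 1,
      ∃ t ∈ Icc (0:ℝ) 1, X t = x ∧ 1 - Y t = y := by
    intro x hx y hy
    obtain ⟨t, ht, e1, e2⟩ := S x hx (1 - y) ⟨by linarith [hy.2], by linarith [hy.1]⟩
    exact ⟨t, ht, e1, by rw [e2]; ring⟩
  have Sxy : ∀ x ∈ Icc (0:ℝ) 1, ∀ y ∈ Icc (0:ℝ) 1,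
      ∃ t ∈ Icc (0:ℝ) 1, 1 - X t = x ∧ 1 - Y t = y := by
    intro x hx y hy
    obtain ⟨t, ht, e1, e2⟩ := S (1 - x) ⟨by linarith [hx.2], by linarith [hx.1]⟩
      (1 - y) ⟨by linarith [hy.2], by linarith [hy.1]⟩
    exact ⟨t, ht, by rw [e1]; ring, by rw [e2]; ring⟩
  -- the four possible minima
  have caseA : ta < tb → ta < tc → ta < td → False := fun u1 u2 u3 =>
    stl_min X Y H S ta tb tc td hta htb htc htd
      hA0 hA1 hB0 hB1 hC0 hC1 hD0 hD1 u1 u2 u3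
  have caseB : tb < ta → tb < tc → tb < td → False := fun u1 u2 u3 =>
    stl_min (fun t => 1 - X t) Y Hx Sx tb ta td tc htb hta htd htc
      (by simp [hB0]) hB1 (by simp [hA0]) hA1
      (by simp [hD0]) hD1 (by simp [hC0]) hC1 u1 u3 u2
  have caseC : tc < ta → tc < tb → tc < td → False := fun u1 u2 u3 =>
    stl_min (fun t => 1 - X t) (fun t => 1 - Y t) Hxy Sxy tc td ta tb htc htd hta htb
      (by simp [hC0]) (by simp [hC1])
      (by simp [hD0]) (by simp [hD1])
      (by simp [hA0]) (by simp [hA1])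
      (by simp [hB0]) (by simp [hB1]) u3 u1 u2
  have caseD : td < ta → td < tb → td < tc → False := fun u1 u2 u3 =>
    stl_min X (fun t => 1 - Y t) Hy Sy td tc tb ta htd htc htb hta
      hD0 (by simp [hD1]) hC0 (by simp [hC1])
      hB0 (by simp [hB1]) hA0 (by simp [hA1]) u3 u2 u1
  rcases lt_trichotomy ta tb with h1 | h1 | h1
  · rcases lt_trichotomy ta tc with h2 | h2 | h2
    · rcases lt_trichotomy ta td with h3 | h3 | h3
      · exact caseA h1 h2 h3
      · rw [h3, hD1] at hA1; norm_num at hA1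
      · exact caseD h3 (h3.trans h1) (h3.trans h2)
    · rw [h2, hC1] at hA1; norm_num at hA1
    · rcases lt_trichotomy tc td with h3 | h3 | h3
      · exact caseC h2 (h2.trans h1) h3
      · rw [h3, hD0] at hC0; norm_num at hC0
      · exact caseD (h3.trans h2) ((h3.trans h2).trans h1) h3
  · rw [h1, hB0] at hA0; norm_num at hA0
  · rcases lt_trichotomy tb tc with h2 | h2 | h2
    · rcases lt_trichotomy tb td with h3 | h3 | h3
      · exact caseB h1 h2 h3
      · rw [h3, hD0] at hB0; norm_num at hB0
      · exact caseD (h3.trans h1) h3 (h3.trans h2)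
    · rw [h2, hC1] at hB1; norm_num at hB1
    · rcases lt_trichotomy tc td with h3 | h3 | h3
      · exact caseC (h2.trans h1) h2 h3
      · rw [h3, hD0] at hC0; norm_num at hC0
      · exact caseD ((h3.trans h2).trans h1) (h3.trans h2) h3

/-- Every continuous surjection of `[0,1]` onto the unit square has
square-to-linear ratio at least `3.5` at some pair of distinct points. -/
theorem square_to_linear_ratio_ge_three_and_half
    (f : ℝ → EuclideanSpace ℝ (Fin 2))
    (hcont : ContinuousOn f (Icc 0 1))
    (hsurj : f '' Icc 0 1 = unitSquare) :
    ∃ t ∈ Icc (0:ℝ) 1, ∃ t' ∈ Icc (0:ℝ) 1, t ≠ t' ∧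
      3.5 * |t - t'| ≤ ‖f t - f t'‖ ^ 2 := by
  by_contra hcon
  push_neg at hcon
  have normsq : ∀ w : EuclideanSpace ℝ (Fin 2), ‖w‖^2 = (w 0)^2 + (w 1)^2 := by
    intro w
    rw [EuclideanSpace.norm_eq, Real.sq_sqrt (by positivity)]
    simp [Fin.sum_univ_two, sq_abs]
  have H : ∀ s ∈ Icc (0:ℝ) 1, ∀ t ∈ Icc (0:ℝ) 1, s < t →
      (f s 0 - f t 0)^2 + (f s 1 - f t 1)^2 < 7/2 * (t - s) := by
    intro s hs t ht hst
    have h := hcon s hs t ht (ne_of_lt hst)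
    rw [normsq] at h
    have e0 : (f s - f t) 0 = f s 0 - f t 0 := rfl
    have e1 : (f s - f t) 1 = f s 1 - f t 1 := rfl
    have habs : |s - t| = t - s := by
      rw [abs_sub_comm]; exact abs_of_pos (by linarith)
    rw [e0, e1, habs] at h
    norm_num at h
    linarith [h]
  have S : ∀ x ∈ Icc (0:ℝ) 1, ∀ y ∈ Icc (0:ℝ) 1,
      ∃ t ∈ Icc (0:ℝ) 1, f t 0 = x ∧ f t 1 = y := by
    intro x hx y hy
    have hmem : (WithLp.equiv 2 (Fin 2 → ℝ)).symm ![x, y] ∈ unitSquare := ⟨hx, hy⟩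
    rw [← hsurj] at hmem
    obtain ⟨t, ht, hft⟩ := hmem
    refine ⟨t, ht, ?_, ?_⟩ <;> rw [hft] <;> rfl
  exact stl_main (fun t => f t 0) (fun t => f t 1) H S
end

section
/- If a square Q is written as a union of n congruent squares (axis-aligned, all the same side length) with pairwise disjoint interiors whose total area equals the area of Q, then these squares form a regular grid partition of Q; in particular n is a perfect square. -/
open Set

lemma key_lemma (n : ℕ) (a s : ℝ) (hs : 0 < s) (x y : Fin n → ℝ)
    (hx0 : ∀ i, 0 ≤ x i) (hx1 : ∀ i, x i + s ≤ a)
    (hy0 : ∀ i, 0 ≤ y i) (hy1 : ∀ i, y i + s ≤ a)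
    (hcov : ∀ u v : ℝ, 0 ≤ u → u ≤ a → 0 ≤ v → v ≤ a →
      ∃ i, x i ≤ u ∧ u ≤ x i + s ∧ y i ≤ v ∧ v ≤ y i + s)
    (hsep : ∀ i j, i ≠ j → s ≤ |x i - x j| ∨ s ≤ |y i - y j|) :
    ∀ i, ∃ q : ℕ, y i = q * s := by
  have P : ∀ q : ℕ, ∀ i, y i < q * s → ∃ p : ℕ, y i = p * s := by
    intro q
    induction q with
    | zero => intro i h; norm_num at h; exact absurd h (not_lt.2 (hy0 i))
    | succ q ih =>
      intro i hi
      by_cases h : y i < q * s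
      · exact ih i h
      push_neg at h
      rcases eq_or_lt_of_le h with heq | hlt
      · exact ⟨q, heq.symm⟩
      exfalso
      have hq1 : ((q : ℝ) + 1) * s = q * s + s := by ring
      have hi' : y i < q * s + s := by push_cast at hi; linarith
      set y0 := (q * s + y i) / 2 with hy0def
      have hy0lt : y0 < y i := by rw [hy0def]; linarith
      have hy0gt : (q:ℝ) * s < y0 := by rw [hy0def]; linarith
      have hqs0 : (0:ℝ) ≤ q * s := by positivity
      obtain ⟨T, hT1, hT2, hT3, hT4⟩ := hcov (x i + s / 2) y0
        (by linarith [hx0 i]) (by linarith [hx1 i])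
        (by linarith) (by linarith [hy1 i])
      have hyT : (q:ℝ) * s ≤ y T := by
        by_contra hc
        push_neg at hc
        obtain ⟨p, hp⟩ := ih T hc
        have hpq : (p : ℝ) < q := by
          rw [hp] at hc
          exact lt_of_mul_lt_mul_right hc hs.le
        have hpq' : p < q := by exact_mod_cast hpq
        have : (p : ℝ) + 1 ≤ q := by exact_mod_cast hpq'
        nlinarith
      have hne : T ≠ i := by
        intro hTi; rw [hTi] at hT3; linarith
      rcases hsep T i hne with hx | hy
      · rcases abs_cases (x T - x i) with ⟨he, _⟩ | ⟨he, _⟩ <;> rw [he] at hx <;> linarith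
      · rcases abs_cases (y T - y i) with ⟨he, _⟩ | ⟨he, _⟩ <;> rw [he] at hy <;> linarith
  intro i
  obtain ⟨q, hq⟩ := exists_nat_gt (a / s)
  have hq' : a < q * s := by
    rw [div_lt_iff₀ hs] at hq; linarith
  exact P q i (by linarith [hy1 i, hs])

/-- If the square `[0,a]²` is a union of `n` congruent axis-aligned squares of side `s`
with pairwise disjoint interiors whose total area equals the area of `[0,a]²`, then the
squares form a regular grid partition; in particular `n` is a perfect square. -/
theorem union_of_congruent_squares_is_grid
    (n : ℕ) (a s : ℝ) (ha : 0 < a) (hs : 0 < s)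
    (c : Fin n → ℝ × ℝ)
    (hcover : (⋃ i, Icc (c i).1 ((c i).1 + s) ×ˢ Icc (c i).2 ((c i).2 + s)) =
      Icc (0:ℝ) a ×ˢ Icc (0:ℝ) a)
    (hdisj : Pairwise fun i j =>
      Disjoint (Ioo (c i).1 ((c i).1 + s) ×ˢ Ioo (c i).2 ((c i).2 + s))
        (Ioo (c j).1 ((c j).1 + s) ×ˢ Ioo (c j).2 ((c j).2 + s)))
    (harea : (n : ℝ) * s ^ 2 = a ^ 2) :
    ∃ k : ℕ, n = k ^ 2 ∧ a = k * s ∧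
      ∀ i, ∃ p q : ℕ, p < k ∧ q < k ∧ (c i).1 = p * s ∧ (c i).2 = q * s := by
  set x : Fin n → ℝ := fun i => (c i).1 with hxdef
  set y : Fin n → ℝ := fun i => (c i).2 with hydef
  -- each small square is inside the big one
  have hsub : ∀ i, Icc (x i) (x i + s) ×ˢ Icc (y i) (y i + s) ⊆
      Icc (0:ℝ) a ×ˢ Icc (0:ℝ) a := by
    intro i
    rw [← hcover]
    exact subset_iUnion (fun j => Icc (c j).1 ((c j).1 + s) ×ˢ Icc (c j).2 ((c j).2 + s)) i
  have hbounds : ∀ i, 0 ≤ x i ∧ x i + s ≤ a ∧ 0 ≤ y i ∧ y i + s ≤ a := by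
    intro i
    have h1 : (x i, y i) ∈ Icc (0:ℝ) a ×ˢ Icc (0:ℝ) a := by
      apply hsub i
      rw [Set.mem_prod, Set.mem_Icc, Set.mem_Icc]
      dsimp only
      exact ⟨⟨le_rfl, by linarith⟩, ⟨le_rfl, by linarith⟩⟩
    have h2 : (x i + s, y i + s) ∈ Icc (0:ℝ) a ×ˢ Icc (0:ℝ) a := by
      apply hsub i
      rw [Set.mem_prod, Set.mem_Icc, Set.mem_Icc]
      dsimp only
      exact ⟨⟨by linarith, le_rfl⟩, ⟨by linarith, le_rfl⟩⟩
    simp only [Set.mem_prod, Set.mem_Icc] at h1 h2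
    exact ⟨h1.1.1, h2.1.2, h1.2.1, h2.2.2⟩
  have hx0 : ∀ i, 0 ≤ x i := fun i => (hbounds i).1
  have hx1 : ∀ i, x i + s ≤ a := fun i => (hbounds i).2.1
  have hy0 : ∀ i, 0 ≤ y i := fun i => (hbounds i).2.2.1
  have hy1 : ∀ i, y i + s ≤ a := fun i => (hbounds i).2.2.2
  have hcov : ∀ u v : ℝ, 0 ≤ u → u ≤ a → 0 ≤ v → v ≤ a →
      ∃ i, x i ≤ u ∧ u ≤ x i + s ∧ y i ≤ v ∧ v ≤ y i + s := by
    intro u v hu1 hu2 hv1 hv2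
    have hmem : (u, v) ∈ (⋃ i, Icc (c i).1 ((c i).1 + s) ×ˢ Icc (c i).2 ((c i).2 + s)) := by
      rw [hcover, Set.mem_prod, Set.mem_Icc, Set.mem_Icc]
      dsimp only
      exact ⟨⟨hu1, hu2⟩, ⟨hv1, hv2⟩⟩
    rw [mem_iUnion] at hmem
    obtain ⟨i, hi⟩ := hmem
    simp only [Set.mem_prod, Set.mem_Icc] at hi
    exact ⟨i, hi.1.1, hi.1.2, hi.2.1, hi.2.2⟩
  have hsep : ∀ i j, i ≠ j → s ≤ |x i - x j| ∨ s ≤ |y i - y j| := by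
    intro i j hij
    by_contra hc
    push_neg at hc
    obtain ⟨hcx, hcy⟩ := hc
    rw [abs_lt] at hcx hcy
    have hmem1 : ((x i + x j + s)/2, (y i + y j + s)/2) ∈
        Ioo (c i).1 ((c i).1 + s) ×ˢ Ioo (c i).2 ((c i).2 + s) := by
      simp only [mem_prod, mem_Ioo]
      constructor <;> constructor <;>
        simp only [hxdef, hydef] at hcx hcy ⊢ <;> linarith [hcx.1, hcx.2, hcy.1, hcy.2]
    have hmem2 : ((x i + x j + s)/2, (y i + y j + s)/2) ∈
        Ioo (c j).1 ((c j).1 + s) ×ˢ Ioo (c j).2 ((c j).2 + s) := by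
      simp only [mem_prod, mem_Ioo]
      constructor <;> constructor <;>
        simp only [hxdef, hydef] at hcx hcy ⊢ <;> linarith [hcx.1, hcx.2, hcy.1, hcy.2]
    exact Set.disjoint_left.1 (hdisj hij) hmem1 hmem2
  have hYlat : ∀ i, ∃ q : ℕ, y i = q * s :=
    key_lemma n a s hs x y hx0 hx1 hy0 hy1 hcov hsep
  have hXlat : ∀ i, ∃ q : ℕ, x i = q * s := by
    apply key_lemma n a s hs y x hy0 hy1 hx0 hx1
    · intro u v hu1 hu2 hv1 hv2
      obtain ⟨i, h1, h2, h3, h4⟩ := hcov v u hv1 hv2 hu1 hu2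
      exact ⟨i, h3, h4, h1, h2⟩
    · intro i j hij
      exact (hsep i j hij).symm
  -- find k : a = k * s
  obtain ⟨i0, hi1, hi2, _, _⟩ := hcov a 0 ha.le le_rfl le_rfl ha.le
  have hax : a = x i0 + s := le_antisymm hi2 (hx1 i0)
  obtain ⟨p0, hp0⟩ := hXlat i0
  refine ⟨p0 + 1, ?_, ?_, ?_⟩
  · -- n = (p0+1)^2
    have hak : a = ((p0:ℝ) + 1) * s := by rw [hax, hp0]; ring
    have : (n : ℝ) * s ^ 2 = (((p0:ℝ) + 1)) ^ 2 * s ^ 2 := by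
      rw [harea, hak]; ring
    have hn : (n : ℝ) = ((p0:ℝ) + 1) ^ 2 :=
      mul_right_cancel₀ (pow_ne_zero 2 hs.ne') this
    exact_mod_cast hn
  · push_cast; rw [hax, hp0]; ring
  · intro i
    obtain ⟨p, hp⟩ := hXlat i
    obtain ⟨q, hq⟩ := hYlat i
    have hak : a = ((p0:ℝ) + 1) * s := by rw [hax, hp0]; ring
    refine ⟨p, q, ?_, ?_, hp, hq⟩
    · have h1 : (p:ℝ) * s + s ≤ ((p0:ℝ) + 1) * s := by rw [← hak, ← hp]; exact hx1 i
      have h2 : (p:ℝ) + 1 ≤ (p0:ℝ) + 1 := by nlinarith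
      have : (p:ℝ) < (p0:ℝ) + 1 := by linarith
      exact_mod_cast this
    · have h1 : (q:ℝ) * s + s ≤ ((p0:ℝ) + 1) * s := by rw [← hak, ← hq]; exact hy1 i
      have h2 : (q:ℝ) + 1 ≤ (p0:ℝ) + 1 := by nlinarith
      have : (q:ℝ) < (p0:ℝ) + 1 := by linarith
      exact_mod_cast this
end

section
/- For k > 2, it is impossible to enumerate all k² squares of the regular k×k grid partition of a square as Q₁, Q₂, …, Q_{k²} so that Q_i and Q_{i+1} share a side for all i ≤ k²-1 and Q_i and Q_{i+2} meet exactly in a vertex for all i ≤ k²-2. -/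
lemma sum_pairs (m : ℕ) (f : ℕ → ℕ) :
    ∑ i ∈ Finset.range (2*m), f i = ∑ t ∈ Finset.range m, (f (2*t) + f (2*t+1)) := by
  induction m with
  | zero => simp
  | succ m ih =>
      have h2 : 2 * (m+1) = (2*m) + 1 + 1 := by ring
      rw [h2, Finset.sum_range_succ, Finset.sum_range_succ, ih, Finset.sum_range_succ]
      omega

lemma sum_pairs' (m : ℕ) (f : ℕ → ℕ) :
    ∑ i ∈ Finset.range (2*m+1), f i
      = f 0 + ∑ t ∈ Finset.range m, (f (2*t+1) + f (2*t+2)) := by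
  rw [Finset.sum_range_succ', sum_pairs m (fun i => f (i+1))]
  have h : ∀ t ∈ Finset.range m, f (2*t+1) + f (2*t+(1+1)) = f (2*t+1) + f (2*t+2) :=
    fun t _ => rfl
  rw [Finset.sum_congr rfl h]
  omega

lemma grid_core (k n : ℕ) (hk : 2 < k) (hn : n = k ^ 2) (X Y : ℕ → ℕ)
    (hA : ∀ i, i + 1 < n →
      ((X i : ℤ) - (X (i+1) : ℤ)).natAbs + ((Y i : ℤ) - (Y (i+1) : ℤ)).natAbs = 1)
    (hBX : ∀ i, i + 2 < n → ((X i : ℤ) - (X (i+2) : ℤ)).natAbs = 1)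
    (hBY : ∀ i, i + 2 < n → ((Y i : ℤ) - (Y (i+2) : ℤ)).natAbs = 1)
    (hcount : ∀ v, v < k → ∑ i ∈ Finset.range n, (if X i = v then 1 else 0) = k)
    (h01 : X 0 ≠ X 1) : False := by
  have hkk : n = k * k := by rw [hn]; ring
  have hn9 : 9 ≤ n := by
    have : 3 * 3 ≤ k * k := Nat.mul_le_mul hk hk
    omega
  -- moves alternate: X changes precisely at even indices
  have halt : ∀ i, i + 1 < n → (X i ≠ X (i+1) ↔ i % 2 = 0) := by
    intro i
    induction i with
    | zero => intro _; simpa using h01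
    | succ i ih =>
        intro h
        have h1 : i + 1 < n := by omega
        have e1 := hA i h1
        have e2 := hA (i+1) h
        have e3 := hBX i (by omega : i + 2 < n)
        have e4 := hBY i (by omega : i + 2 < n)
        have e5 := ih h1
        have hb1 : X (i+1+1) = X (i+2) := rfl
        have hb2 : Y (i+1+1) = Y (i+2) := rfl
        omega
  have hodd : ∀ i, i % 2 = 1 → i + 1 < n → X (i+1) = X i := by
    intro i hi h; have := halt i h; omega
  have heven : ∀ i, i % 2 = 0 → i + 1 < n →
      (X (i+1) = X i + 1 ∨ X i = X (i+1) + 1) := by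
    intro i hi h; have h1 := halt i h; have h2 := hA i h; omega
  rcases Nat.mod_two_eq_zero_or_one k with hk2 | hk2
  · -- k even : crossing argument
    have hn2 : n % 2 = 0 := by rw [hkk, Nat.mul_mod, hk2]
    obtain ⟨m, hm⟩ : ∃ m, n = 2*m := ⟨n/2, by omega⟩
    have hs0 := hcount 0 (by omega)
    have hs1 := hcount 1 (by omega)
    rw [hm, sum_pairs] at hs0 hs1
    have key0 : ∀ t ∈ Finset.range m,
        ((if (X (2*t) = 0 ∧ X (2*t+1) = 1) ∨ (X (2*t) = 1 ∧ X (2*t+1) = 0) then 1 else 0) : ℕ)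
        = (if X (2*t) = 0 then 1 else 0) + (if X (2*t+1) = 0 then 1 else 0) := by
      intro t ht
      rw [Finset.mem_range] at ht
      have hst := heven (2*t) (by omega) (by omega)
      split_ifs <;> omega
    have key1 : ∀ t ∈ Finset.range m,
        (((if (X (2*t) = 0 ∧ X (2*t+1) = 1) ∨ (X (2*t) = 1 ∧ X (2*t+1) = 0) then 1 else 0)
         + (if (X (2*t) = 1 ∧ X (2*t+1) = 2) ∨ (X (2*t) = 2 ∧ X (2*t+1) = 1) then 1 else 0)) : ℕ)
        = (if X (2*t) = 1 then 1 else 0) + (if X (2*t+1) = 1 then 1 else 0) := by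
      intro t ht
      rw [Finset.mem_range] at ht
      have hst := heven (2*t) (by omega) (by omega)
      split_ifs <;> omega
    have hs0' : ∑ t ∈ Finset.range m,
        ((if (X (2*t) = 0 ∧ X (2*t+1) = 1) ∨ (X (2*t) = 1 ∧ X (2*t+1) = 0) then 1 else 0) : ℕ) = k := by
      rw [← hs0]; exact Finset.sum_congr rfl key0
    have hs1' : (∑ t ∈ Finset.range m,
        ((if (X (2*t) = 0 ∧ X (2*t+1) = 1) ∨ (X (2*t) = 1 ∧ X (2*t+1) = 0) then 1 else 0) : ℕ))
        + (∑ t ∈ Finset.range m,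
        ((if (X (2*t) = 1 ∧ X (2*t+1) = 2) ∨ (X (2*t) = 2 ∧ X (2*t+1) = 1) then 1 else 0) : ℕ)) = k := by
      rw [← hs1, ← Finset.sum_add_distrib]
      exact Finset.sum_congr rfl key1
    have hc1 : ∑ t ∈ Finset.range m,
        ((if (X (2*t) = 1 ∧ X (2*t+1) = 2) ∨ (X (2*t) = 2 ∧ X (2*t+1) = 1) then 1 else 0) : ℕ) = 0 := by
      omega
    have hcross : ∀ t, t < m →
        ¬((X (2*t) = 1 ∧ X (2*t+1) = 2) ∨ (X (2*t) = 2 ∧ X (2*t+1) = 1)) := by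
      intro t ht hcon
      have := Finset.sum_eq_zero_iff.mp hc1 t (Finset.mem_range.mpr ht)
      rw [if_pos hcon] at this
      omega
    have hside : ∀ i, i < n → (X i ≤ 1 ↔ X 0 ≤ 1) := by
      intro i
      induction i with
      | zero => exact fun _ => Iff.rfl
      | succ i ih =>
          intro h
          have ih' := ih (by omega)
          rcases Nat.mod_two_eq_zero_or_one i with hp | hp
          · obtain ⟨t, rfl⟩ : ∃ t, i = 2*t := ⟨i/2, by omega⟩
            have hst := heven (2*t) hp h
            have hcr := hcross t (by omega)
            omega
          · have := hodd i hp h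
            omega
    have e0 : ∃ i ∈ Finset.range n, ((if X i = 0 then 1 else 0) : ℕ) ≠ 0 :=
      Finset.exists_ne_zero_of_sum_ne_zero (by rw [hcount 0 (by omega)]; omega)
    have e2 : ∃ i ∈ Finset.range n, ((if X i = 2 then 1 else 0) : ℕ) ≠ 0 :=
      Finset.exists_ne_zero_of_sum_ne_zero (by rw [hcount 2 hk]; omega)
    obtain ⟨i, hi, hi0⟩ := e0
    obtain ⟨j, hj, hj2⟩ := e2
    rw [Finset.mem_range] at hi hj
    have hXi : X i = 0 := by by_contra hne; simp [hne] at hi0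
    have hXj : X j = 2 := by by_contra hne; simp [hne] at hj2
    have s1 := hside i hi
    have s2 := hside j hj
    omega
  · -- k odd : parity argument
    have hn2 : n % 2 = 1 := by rw [hkk, Nat.mul_mod, hk2]
    obtain ⟨m, hm⟩ : ∃ m, n = 2*m+1 := ⟨n/2, by omega⟩
    set v := if X 0 = 0 then 1 else 0 with hv
    have hvk : v < k := by rw [hv]; split <;> omega
    have hv0 : X 0 ≠ v := by rw [hv]; split <;> omega
    have hsum := hcount v hvk
    rw [hm, sum_pairs'] at hsum
    have hz : ((if X 0 = v then 1 else 0) : ℕ) = 0 := by rw [if_neg hv0]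
    have hpair : ∀ t ∈ Finset.range m,
        (((if X (2*t+1) = v then 1 else 0) + (if X (2*t+2) = v then 1 else 0)) : ℕ)
        = 2 * (if X (2*t+1) = v then 1 else 0) := by
      intro t ht
      rw [Finset.mem_range] at ht
      have heq : X (2*t+2) = X (2*t+1) := hodd (2*t+1) (by omega) (by omega)
      rw [heq]; ring
    rw [Finset.sum_congr rfl hpair, ← Finset.mul_sum, hz] at hsum
    omega



lemma count_col (k : ℕ) (e : Fin (k^2) ≃ Fin k × Fin k) (X : ℕ → ℕ)
    (hX : ∀ i (h : i < k^2), X i = ((e ⟨i, h⟩).1 : ℕ)) (v : ℕ) (hv : v < k) :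
    ∑ i ∈ Finset.range (k^2), (if X i = v then 1 else 0) = k := by
  rw [← Fin.sum_univ_eq_sum_range (fun i => if X i = v then (1:ℕ) else 0) (k^2)]
  have h1 : ∀ a : Fin (k^2),
      (if X a.val = v then (1:ℕ) else 0) = (if ((e a).1 : ℕ) = v then 1 else 0) := by
    intro a
    rw [hX a.val a.isLt, Fin.eta]
  rw [Finset.sum_congr rfl (fun a _ => h1 a)]
  have h2 : (∑ a : Fin (k^2), (if ((e a).1 : ℕ) = v then (1:ℕ) else 0))
      = ∑ p : Fin k × Fin k, (if (p.1 : ℕ) = v then (1:ℕ) else 0) :=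
    Fintype.sum_equiv e _ _ (fun a => rfl)
  rw [h2, Fintype.sum_prod_type]
  have h3 : ∀ a : Fin k,
      (∑ _b : Fin k, (if (a : ℕ) = v then (1:ℕ) else 0)) = (if a = ⟨v, hv⟩ then k else 0) := by
    intro a
    simp only [Finset.sum_const, Finset.card_univ, Fintype.card_fin, smul_eq_mul, Fin.ext_iff]
    split_ifs <;> omega
  rw [Finset.sum_congr rfl (fun a _ => h3 a)]
  simp

open Set

/-- For `k > 2` one cannot enumerate all `k²` cells of the `k × k` grid so that
consecutive cells share a side and cells two apart meet exactly in a vertex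
(are diagonally adjacent). -/
theorem no_side_and_diagonal_enumeration (k : ℕ) (hk : 2 < k) :
    ¬ ∃ e : Fin (k ^ 2) ≃ (Fin k × Fin k),
      (∀ i : ℕ, ∀ h : i + 1 < k ^ 2,
        (((e ⟨i, by omega⟩).1.val : ℤ) - ((e ⟨i + 1, h⟩).1.val : ℤ)).natAbs +
        (((e ⟨i, by omega⟩).2.val : ℤ) - ((e ⟨i + 1, h⟩).2.val : ℤ)).natAbs = 1) ∧
      (∀ i : ℕ, ∀ h : i + 2 < k ^ 2,
        (((e ⟨i, by omega⟩).1.val : ℤ) - ((e ⟨i + 2, h⟩).1.val : ℤ)).natAbs = 1 ∧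
        (((e ⟨i, by omega⟩).2.val : ℤ) - ((e ⟨i + 2, h⟩).2.val : ℤ)).natAbs = 1) := by
  rintro ⟨e, h1, h2⟩
  set X : ℕ → ℕ := fun i => if h : i < k^2 then ((e ⟨i, h⟩).1 : ℕ) else 0 with hXdef
  set Y : ℕ → ℕ := fun i => if h : i < k^2 then ((e ⟨i, h⟩).2 : ℕ) else 0 with hYdef
  have hXd : ∀ i (h : i < k^2), X i = ((e ⟨i, h⟩).1 : ℕ) := by
    intro i h; simp only [hXdef]; rw [dif_pos h]
  have hYd : ∀ i (h : i < k^2), Y i = ((e ⟨i, h⟩).2 : ℕ) := by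
    intro i h; simp only [hYdef]; rw [dif_pos h]
  have hA : ∀ i, i + 1 < k^2 →
      ((X i : ℤ) - (X (i+1) : ℤ)).natAbs + ((Y i : ℤ) - (Y (i+1) : ℤ)).natAbs = 1 := by
    intro i h
    rw [hXd i (by omega), hXd (i+1) h, hYd i (by omega), hYd (i+1) h]
    exact h1 i h
  have hBX : ∀ i, i + 2 < k^2 → ((X i : ℤ) - (X (i+2) : ℤ)).natAbs = 1 := by
    intro i h
    rw [hXd i (by omega), hXd (i+2) h]
    exact (h2 i h).1
  have hBY : ∀ i, i + 2 < k^2 → ((Y i : ℤ) - (Y (i+2) : ℤ)).natAbs = 1 := by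
    intro i h
    rw [hYd i (by omega), hYd (i+2) h]
    exact (h2 i h).2
  have hcX : ∀ v, v < k → ∑ i ∈ Finset.range (k^2), (if X i = v then 1 else 0) = k :=
    fun v hv => count_col k e X hXd v hv
  have hcY : ∀ v, v < k → ∑ i ∈ Finset.range (k^2), (if Y i = v then 1 else 0) = k :=
    fun v hv => count_col k (e.trans (Equiv.prodComm (Fin k) (Fin k))) Y (fun i h => hYd i h) v hv
  have hstep := hA 0 (by nlinarith)
  have b1 : X (0+1) = X 1 := rfl
  have b2 : Y (0+1) = Y 1 := rfl
  rcases eq_or_ne (X 0) (X 1) with hxy | hxy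
  · have hy : Y 0 ≠ Y 1 := by omega
    exact grid_core k (k^2) hk rfl Y X
      (fun i h => by have := hA i h; omega) hBY hBX hcY hy
  · exact grid_core k (k^2) hk rfl X Y hA hBX hBY hcX hxy
end

section
/- A nonempty closed subset K of (0, 1] all of whose points are non-isolated from the left (i.e. every point of K is a limit from the left of points of K) is connected, hence an interval. -/
open Set

/-- A nonempty subset of `(0,1]`, closed in `(0,1]`, all of whose points are limits
from the left of points of the set, is connected, hence an interval. -/
theorem closed_left_limit_set_connected (K : Set ℝ)
    (hne : K.Nonempty) (hsub : K ⊆ Ioc 0 1)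
    (hclosed : ∃ F : Set ℝ, IsClosed F ∧ K = F ∩ Ioc 0 1)
    (hleft : ∀ x ∈ K, ∀ ε > (0:ℝ), ∃ y ∈ K, x - ε < y ∧ y < x) :
    IsPreconnected K ∧ K.OrdConnected := by
  obtain ⟨F, hF, hKF⟩ := hclosed
  have hkey : ∀ x ∈ K, ∀ z : ℝ, 0 < z → z < x → z ∈ K := by
    intro x hx z hz hzx
    by_contra hzK
    set S : Set ℝ := K ∩ Icc z x with hS
    have hSne : S.Nonempty := ⟨x, hx, le_of_lt hzx, le_refl x⟩
    have hSbdd : BddBelow S := ⟨z, fun y hy => hy.2.1⟩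
    have hSF : S = F ∩ Icc z x := by
      ext y
      constructor
      · rintro ⟨hyK, hyI⟩
        exact ⟨(hKF ▸ hyK).1, hyI⟩
      · rintro ⟨hyF, hyI⟩
        exact ⟨hKF ▸ ⟨hyF, lt_of_lt_of_le hz hyI.1,
          le_trans hyI.2 (hsub hx).2⟩, hyI⟩
    have hSclosed : IsClosed S := hSF ▸ hF.inter isClosed_Icc
    set t := sInf S with ht
    have htS : t ∈ S := hSclosed.csInf_mem hSne hSbdd
    have htK : t ∈ K := htS.1
    have hzt : z < t := lt_of_le_of_ne htS.2.1 (fun h => hzK (h ▸ htK))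
    obtain ⟨y, hyK, hy1, hy2⟩ := hleft t htK (t - z) (by linarith)
    have hyz : z < y := by linarith
    have hyS : y ∈ S := ⟨hyK, le_of_lt hyz, le_of_lt (lt_of_lt_of_le hy2 htS.2.2)⟩
    exact absurd (csInf_le hSbdd hyS) (not_le.mpr hy2)
  have hord : K.OrdConnected := by
    constructor
    intro a ha b hb c hc
    rcases eq_or_lt_of_le hc.2 with h | h
    · exact h ▸ hb
    · exact hkey b hb c (lt_of_lt_of_le (hsub ha).1 hc.1) h
  exact ⟨hord.isPreconnected, hord⟩
end

section
/- Let f : [0,1] → ℝ² satisfy |f(t)-f(t')|² ≤ 5|t-t'|, and suppose at times 0 = t₀ < t₁ < t₂ < t₃ = 1 the points f(t₀), f(t₁), f(t₂), f(t₃) are the four vertices of the unit square with f(t₀), f(t₁) diagonally opposite and f(t₂), f(t₃) diagonally opposite. Then t₁ - t₀ ≥ 2/5, t₃ - t₂ ≥ 2/5, and t₂ - t₁ ≥ 1/5, which contradicts t₃ - t₀ = 1. Hence this vertex order is impossible. -/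
open Set

/-- If `f : [0,1] → ℝ²` satisfies `‖f t - f t'‖² ≤ 5|t - t'|` and visits the four
vertices of the unit square at times `0 = t₀ < t₁ < t₂ < t₃ = 1` with the first two
diagonally opposite (distance `√2`) and the last two diagonally opposite, then
`t₁ - t₀ ≥ 2/5`, `t₃ - t₂ ≥ 2/5` and `t₂ - t₁ ≥ 1/5` (so, as these bounds add up to
the whole time `t₃ - t₀ = 1`, such a diagonal vertex order is forced to be extremal
and, for ratio strictly less than `5`, impossible). -/
theorem diagonal_vertex_order_time_bounds
    (f : ℝ → EuclideanSpace ℝ (Fin 2))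
    (hratio : ∀ t ∈ Icc (0:ℝ) 1, ∀ t' ∈ Icc (0:ℝ) 1, ‖f t - f t'‖ ^ 2 ≤ 5 * |t - t'|)
    (t₁ t₂ : ℝ) (h01 : 0 < t₁) (h12 : t₁ < t₂) (h21 : t₂ < 1)
    (hd01 : ‖f t₁ - f 0‖ ^ 2 = 2)
    (hd12 : ‖f t₂ - f t₁‖ = 1)
    (hd23 : ‖f 1 - f t₂‖ ^ 2 = 2) :
    2 / 5 ≤ t₁ - 0 ∧ 2 / 5 ≤ 1 - t₂ ∧ 1 / 5 ≤ t₂ - t₁ := by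
  have m1 : t₁ ∈ Icc (0:ℝ) 1 := ⟨h01.le, (h12.trans h21).le⟩
  have m2 : t₂ ∈ Icc (0:ℝ) 1 := ⟨(h01.trans h12).le, h21.le⟩
  have m0 : (0:ℝ) ∈ Icc (0:ℝ) 1 := ⟨le_refl _, zero_le_one⟩
  have m3 : (1:ℝ) ∈ Icc (0:ℝ) 1 := ⟨zero_le_one, le_refl _⟩
  have a := hratio t₁ m1 0 m0
  have b := hratio t₂ m2 t₁ m1
  have c := hratio 1 m3 t₂ m2
  rw [hd01, abs_of_pos (by linarith)] at a
  rw [hd12] at b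
  rw [abs_of_pos (by linarith)] at b
  rw [hd23, abs_of_pos (by linarith)] at c
  norm_num at b
  refine ⟨by linarith, by linarith, by linarith⟩
end

section
/- There is no enumeration of the cells of the k×k grid (k ≥ 3) by a Hamiltonian path of edge-adjacent cells that starts at cell (0,0), moves to (0,1), then turns right to (1,1), such that the path never makes two turns in a row and never enters a cell all of whose unvisited neighbors form a dead end; specifically, after the moves (0,0)→(0,1)→(1,1)→(2,1), the path cannot be continued to a Hamiltonian path under the constraint that turns are never consecutive. -/
/-- The displacement of the enumeration `p` at step `i` (from cell `i` to cell `i+1`),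
as a vector of integers. -/
def disp (p : ℕ → ℕ × ℕ) (i : ℕ) : ℤ × ℤ :=
  (((p (i + 1)).1 : ℤ) - ((p i).1 : ℤ), ((p (i + 1)).2 : ℤ) - ((p i).2 : ℤ))

set_option maxHeartbeats 1000000

structure HPHyp (k : ℕ) (p : ℕ → ℕ × ℕ) : Prop where
  grid : ∀ i < k ^ 2, (p i).1 < k ∧ (p i).2 < k
  inj : ∀ i j, i < k ^ 2 → j < k ^ 2 → p i = p j → i = j
  surj : ∀ q : ℕ × ℕ, q.1 < k → q.2 < k → ∃ i < k ^ 2, p i = q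
  e0 : p 0 = (0, 0)
  e1 : p 1 = (0, 1)
  e2 : p 2 = (1, 1)
  e3 : p 3 = (2, 1)
  step : ∀ i, i + 1 < k ^ 2 → (disp p i).1.natAbs + (disp p i).2.natAbs = 1
  noturn : ∀ j, 1 ≤ j → j + 2 < k ^ 2 →
    ¬(disp p (j - 1) ≠ disp p j ∧ disp p j ≠ disp p (j + 1))
  k3 : 3 ≤ k

namespace HPHyp

variable {k : ℕ} {p : ℕ → ℕ × ℕ}

/-- `Sat c a b` : the cell `c` occurs at an interior step of the path, and its two
path-neighbours are exactly the cells `a` and `b` (in one of the two orders). -/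
def Sat (k : ℕ) (p : ℕ → ℕ × ℕ) (c a b : ℕ × ℕ) : Prop :=
  ∃ t, 1 ≤ t ∧ t + 1 < k ^ 2 ∧ p t = c ∧
    ((p (t - 1) = a ∧ p (t + 1) = b) ∨ (p (t - 1) = b ∧ p (t + 1) = a))

theorem k2ge9 (H : HPHyp k p) : 9 ≤ k ^ 2 := by
  calc (9:ℕ) = 3 ^ 2 := by norm_num
  _ ≤ k ^ 2 := Nat.pow_le_pow_left H.k3 2

theorem nbrF (H : HPHyp k p) (t : ℕ) (ht : t + 1 < k ^ 2) :
    ((p (t+1)).1 = (p t).1 + 1 ∧ (p (t+1)).2 = (p t).2) ∨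
    ((p (t+1)).1 + 1 = (p t).1 ∧ (p (t+1)).2 = (p t).2) ∨
    ((p (t+1)).1 = (p t).1 ∧ (p (t+1)).2 = (p t).2 + 1) ∨
    ((p (t+1)).1 = (p t).1 ∧ (p (t+1)).2 + 1 = (p t).2) := by
  have h := H.step t ht; simp only [disp] at h; omega

theorem nbrB (H : HPHyp k p) (t : ℕ) (h1 : 1 ≤ t) (ht : t < k ^ 2) :
    ((p (t-1)).1 = (p t).1 + 1 ∧ (p (t-1)).2 = (p t).2) ∨
    ((p (t-1)).1 + 1 = (p t).1 ∧ (p (t-1)).2 = (p t).2) ∨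
    ((p (t-1)).1 = (p t).1 ∧ (p (t-1)).2 = (p t).2 + 1) ∨
    ((p (t-1)).1 = (p t).1 ∧ (p (t-1)).2 + 1 = (p t).2) := by
  have h := H.step (t-1) (by omega)
  have e : t - 1 + 1 = t := by omega
  simp only [disp] at h
  rw [e] at h; omega

/-- The cell `(1,0)` is the final cell of the path. -/
theorem endpoint (H : HPHyp k p) : p (k ^ 2 - 1) = (1, 0) := by
  have h9 := H.k2ge9
  have hk := H.k3
  obtain ⟨m, hm, hpm⟩ := H.surj (1, 0) (by omega) (by omega)
  -- m ≥ 1 etc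
  have hm0 : m ≠ 0 := by intro h; rw [h, H.e0] at hpm; exact absurd hpm (by decide)
  have hm1 : m ≠ 1 := by intro h; rw [h, H.e1] at hpm; exact absurd hpm (by decide)
  have hm3 : m ≠ 3 := by intro h; rw [h, H.e3] at hpm; exact absurd hpm (by decide)
  -- backward neighbour is (2,0)
  have hb := H.nbrB m (by omega) hm
  rw [hpm] at hb
  have hback : p (m - 1) = (2, 0) := by
    have hg := H.grid (m-1) (by omega)
    rcases hb with ⟨a, b⟩ | ⟨a, b⟩ | ⟨a, b⟩ | ⟨a, b⟩
    · exact Prod.ext (by omega) (by omega)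
    · -- p (m-1) = (0,0) = p 0
      exfalso
      have : p (m-1) = p 0 := by rw [H.e0]; exact Prod.ext (by omega) (by omega)
      have := H.inj (m-1) 0 (by omega) (by omega) this
      omega
    · exfalso
      have : p (m-1) = p 2 := by rw [H.e2]; exact Prod.ext (by omega) (by omega)
      have := H.inj (m-1) 2 (by omega) (by omega) this
      omega
    · omega
  -- if m+1 < k^2, forward neighbour is also (2,0): contradiction
  by_cases hmk : m + 1 < k ^ 2
  · exfalso
    have hf := H.nbrF m hmk
    rw [hpm] at hf
    have hfor : p (m + 1) = (2, 0) := by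
      have hg := H.grid (m+1) (by omega)
      rcases hf with ⟨a, b⟩ | ⟨a, b⟩ | ⟨a, b⟩ | ⟨a, b⟩
      · exact Prod.ext (by omega) (by omega)
      · exfalso
        have : p (m+1) = p 0 := by rw [H.e0]; exact Prod.ext (by omega) (by omega)
        have := H.inj (m+1) 0 (by omega) (by omega) this
        omega
      · exfalso
        have : p (m+1) = p 2 := by rw [H.e2]; exact Prod.ext (by omega) (by omega)
        have := H.inj (m+1) 2 (by omega) (by omega) this
        omega
      · omega
    have : p (m-1) = p (m+1) := by rw [hback, hfor]
    have := H.inj (m-1) (m+1) (by omega) (by omega) this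
    omega
  · have : m = k ^ 2 - 1 := by omega
    rw [← this]; exact hpm

/-- Index bounds for a cell with second coordinate at least 2. -/
theorem idx (H : HPHyp k p) (t : ℕ) (ht : t < k ^ 2) (hy : 2 ≤ (p t).2) :
    2 ≤ t ∧ t + 2 < k ^ 2 := by
  have h9 := H.k2ge9
  have ht0 : t ≠ 0 := by intro h; rw [h, H.e0] at hy; exact absurd hy (by decide)
  have ht1 : t ≠ 1 := by intro h; rw [h, H.e1] at hy; exact absurd hy (by decide)
  have hte : t ≠ k ^ 2 - 1 := by
    intro h; rw [h, H.endpoint] at hy; exact absurd hy (by decide)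
  have hte2 : t ≠ k ^ 2 - 2 := by
    intro h
    have hf := H.nbrF t (by omega)
    have : p (t + 1) = (1, 0) := by
      have : t + 1 = k ^ 2 - 1 := by omega
      rw [this, H.endpoint]
    rw [this] at hf
    simp at hf; omega
  omega

theorem straight (H : HPHyp k p) (t : ℕ) (h2 : 2 ≤ t) (ht : t + 2 < k ^ 2)
    (hturn : disp p (t - 1) ≠ disp p t) :
    disp p (t + 1) = disp p t ∧ disp p (t - 2) = disp p (t - 1) := by
  constructor
  · have h := H.noturn t (by omega) ht
    by_contra hne
    exact h ⟨hturn, fun e => hne e.symm⟩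
  · have h := H.noturn (t - 1) (by omega) (by omega)
    have e1 : t - 1 - 1 = t - 2 := by omega
    have e2 : t - 1 + 1 = t := by omega
    rw [e1, e2] at h
    by_contra hne
    exact h ⟨hne, hturn⟩

theorem excl (H : HPHyp k p) {c a b : ℕ × ℕ} (hS : Sat k p c a b)
    (s : ℕ) (hs : s < k ^ 2) (hps : p s = c) :
    1 ≤ s ∧ s + 1 < k ^ 2 ∧
      ((p (s - 1) = a ∧ p (s + 1) = b) ∨ (p (s - 1) = b ∧ p (s + 1) = a)) := by
  obtain ⟨t, ht1, ht2, hpt, ho⟩ := hS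
  have hst : s = t := H.inj s t hs (by omega) (by rw [hps, hpt])
  subst hst
  exact ⟨ht1, ht2, ho⟩


theorem base (H : HPHyp k p) :
    5 ≤ k ∧ Sat k p (0,3) (0,2) (0,4) ∧ Sat k p (1,2) (0,2) (2,2) := by
  have hk := H.k3; have h9 := H.k2ge9
  obtain ⟨t, ht, hpt⟩ := H.surj (0, 2) (by omega) (by omega)
  obtain ⟨h2t, ht2⟩ := H.idx t ht (by rw [hpt])
  have et : t - 1 + 1 = t := by omega
  have hf := H.nbrF t (by omega)
  have hb := H.nbrB t (by omega) (by omega)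
  rcases h1e : p (t+1) with ⟨u, v⟩
  rcases h0e : p (t-1) with ⟨a, b⟩
  simp only [hpt, h1e] at hf
  simp only [hpt, h0e] at hb
  -- exclude (0,1) forward and backward; exclude left (x = -1)
  have hfe : (u = 1 ∧ v = 2) ∨ (u = 0 ∧ v = 3) := by
    rcases hf with ⟨c1,c2⟩|⟨c1,c2⟩|⟨c1,c2⟩|⟨c1,c2⟩
    · left; omega
    · omega
    · right; omega
    · exfalso
      have e : ((u,v) : ℕ × ℕ) = (0,1) := Prod.ext (by omega) (by omega)
      have := H.inj (t+1) 1 (by omega) (by omega) (by rw [h1e, H.e1]; exact e)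
      omega
  have hbe : (a = 1 ∧ b = 2) ∨ (a = 0 ∧ b = 3) := by
    rcases hb with ⟨c1,c2⟩|⟨c1,c2⟩|⟨c1,c2⟩|⟨c1,c2⟩
    · left; omega
    · omega
    · right; omega
    · exfalso
      have e : ((a,b) : ℕ × ℕ) = (0,1) := Prod.ext (by omega) (by omega)
      have h21 := H.inj (t-1) 1 (by omega) (by omega) (by rw [h0e, H.e1]; exact e)
      have : t = 2 := by omega
      rw [this, H.e2] at hpt
      exact absurd hpt (by decide)
  have hne : ¬(a = u ∧ b = v) := by
    intro ⟨e1, e2⟩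
    have : p (t-1) = p (t+1) := by rw [h0e, h1e, e1, e2]
    have := H.inj (t-1) (t+1) (by omega) (by omega) this
    omega
  rcases hfe with ⟨hu,hv⟩|⟨hu,hv⟩ <;> rcases hbe with ⟨ha,hb2⟩|⟨ha,hb2⟩
  · exact absurd (⟨by omega, by omega⟩ : a = u ∧ b = v) hne
  ·
    -- p (t-1) = (0,3), p (t+1) = (1,2)
    have hturn : disp p (t-1) ≠ disp p t := by
      intro hEq
      simp only [disp, et, hpt, h0e, h1e, Prod.mk.injEq] at hEq
      omega
    obtain ⟨e1, e2⟩ := H.straight t h2t ht2 hturn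
    rcases h2e : p (t+2) with ⟨w, z⟩
    rcases h3e : p (t-2) with ⟨w2, z2⟩
    simp only [disp, et, show t - 2 + 1 = t - 1 by omega, show t + 1 + 1 = t + 2 from rfl,
      hpt, h0e, h1e, h2e, h3e, Prod.mk.injEq] at e1 e2
    have hg2 := H.grid (t-2) (by omega)
    rw [h3e] at hg2
    have hk5 : 5 ≤ k := by
      have : z2 = 4 := by omega
      omega
    refine ⟨hk5, ⟨t-1, by omega, by omega, by rw [h0e]; exact Prod.ext (by omega) (by omega), Or.inr ⟨?_, ?_⟩⟩,
      ⟨t+1, by omega, by omega, by rw [h1e]; exact Prod.ext (by omega) (by omega), Or.inl ⟨?_, ?_⟩⟩⟩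
    · rw [show t - 1 - 1 = t - 2 by omega, h3e]; exact Prod.ext (by omega) (by omega)
    · rw [et, hpt]
    · rw [show t + 1 - 1 = t from rfl, hpt]
    · rw [show t + 1 + 1 = t + 2 from rfl, h2e]; exact Prod.ext (by omega) (by omega)
  ·
    -- p (t-1) = (1,2), p (t+1) = (0,3)
    have hturn : disp p (t-1) ≠ disp p t := by
      intro hEq
      simp only [disp, et, hpt, h0e, h1e, Prod.mk.injEq] at hEq
      omega
    obtain ⟨e1, e2⟩ := H.straight t h2t ht2 hturn
    rcases h2e : p (t+2) with ⟨w, z⟩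
    rcases h3e : p (t-2) with ⟨w2, z2⟩
    simp only [disp, et, show t - 2 + 1 = t - 1 by omega, show t + 1 + 1 = t + 2 from rfl,
      hpt, h0e, h1e, h2e, h3e, Prod.mk.injEq] at e1 e2
    have hg2 := H.grid (t+2) (by omega)
    rw [h2e] at hg2
    have hk5 : 5 ≤ k := by
      have : z = 4 := by omega
      omega
    refine ⟨hk5, ⟨t+1, by omega, by omega, by rw [h1e]; exact Prod.ext (by omega) (by omega), Or.inl ⟨?_, ?_⟩⟩,
      ⟨t-1, by omega, by omega, by rw [h0e]; exact Prod.ext (by omega) (by omega), Or.inr ⟨?_, ?_⟩⟩⟩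
    · rw [show t + 1 - 1 = t from rfl, hpt]
    · rw [show t + 1 + 1 = t + 2 from rfl, h2e]; exact Prod.ext (by omega) (by omega)
    · rw [show t - 1 - 1 = t - 2 by omega, h3e]; exact Prod.ext (by omega) (by omega)
    · rw [et, hpt]
  · exact absurd (⟨by omega, by omega⟩ : a = u ∧ b = v) hne

theorem stepL (H : HPHyp k p) (d : ℕ) (hd : d + 5 ≤ k)
    (s1 : Sat k p (d, d+3) (d, d+2) (d, d+4))
    (s2 : Sat k p (d+1, d+2) (d, d+2) (d+2, d+2)) :
    d + 6 ≤ k ∧ Sat k p (d+1, d+4) (d+1, d+3) (d+1, d+5) ∧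
      Sat k p (d+2, d+3) (d+1, d+3) (d+3, d+3) := by
  have hk := H.k3; have h9 := H.k2ge9
  obtain ⟨t, ht, hpt⟩ := H.surj (d+1, d+3) (by omega) (by omega)
  obtain ⟨h2t, ht2⟩ := H.idx t ht (by rw [hpt]; show 2 ≤ d + 3; omega)
  have et : t - 1 + 1 = t := by omega
  have hf := H.nbrF t (by omega)
  have hb := H.nbrB t (by omega) (by omega)
  rcases h1e : p (t+1) with ⟨u, v⟩
  rcases h0e : p (t-1) with ⟨a, b⟩
  simp only [hpt, h1e] at hf
  simp only [hpt, h0e] at hb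
  have hfe : (u = d+2 ∧ v = d+3) ∨ (u = d+1 ∧ v = d+4) := by
    rcases hf with ⟨c1,c2⟩|⟨c1,c2⟩|⟨c1,c2⟩|⟨c1,c2⟩
    · left; omega
    · exfalso
      have hx := H.excl s1 (t+1) (by omega)
        (by rw [h1e]; exact Prod.ext (by omega) (by omega))
      rcases hx.2.2 with ⟨q1, _⟩ | ⟨q1, _⟩ <;>
        · rw [show t + 1 - 1 = t from rfl, hpt] at q1
          simp only [Prod.mk.injEq] at q1; omega
    · right; omega
    · exfalso
      have hx := H.excl s2 (t+1) (by omega)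
        (by rw [h1e]; exact Prod.ext (by omega) (by omega))
      rcases hx.2.2 with ⟨q1, _⟩ | ⟨q1, _⟩ <;>
        · rw [show t + 1 - 1 = t from rfl, hpt] at q1
          simp only [Prod.mk.injEq] at q1; omega
  have hbe : (a = d+2 ∧ b = d+3) ∨ (a = d+1 ∧ b = d+4) := by
    rcases hb with ⟨c1,c2⟩|⟨c1,c2⟩|⟨c1,c2⟩|⟨c1,c2⟩
    · left; omega
    · exfalso
      have hx := H.excl s1 (t-1) (by omega)
        (by rw [h0e]; exact Prod.ext (by omega) (by omega))
      rcases hx.2.2 with ⟨_, q1⟩ | ⟨_, q1⟩ <;>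
        · rw [et, hpt] at q1
          simp only [Prod.mk.injEq] at q1; omega
    · right; omega
    · exfalso
      have hx := H.excl s2 (t-1) (by omega)
        (by rw [h0e]; exact Prod.ext (by omega) (by omega))
      rcases hx.2.2 with ⟨_, q1⟩ | ⟨_, q1⟩ <;>
        · rw [et, hpt] at q1
          simp only [Prod.mk.injEq] at q1; omega
  have hne : ¬(a = u ∧ b = v) := by
    intro ⟨e1, e2⟩
    have : p (t-1) = p (t+1) := by rw [h0e, h1e, e1, e2]
    have := H.inj (t-1) (t+1) (by omega) (by omega) this
    omega
  rcases hfe with ⟨hu,hv⟩|⟨hu,hv⟩ <;> rcases hbe with ⟨ha,hb2⟩|⟨ha,hb2⟩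
  · exact absurd (⟨by omega, by omega⟩ : a = u ∧ b = v) hne
  · -- p (t-1) = (d+1,d+4), p (t+1) = (d+2,d+3)
    have hturn : disp p (t-1) ≠ disp p t := by
      intro hEq
      simp only [disp, et, hpt, h0e, h1e, Prod.mk.injEq] at hEq
      omega
    obtain ⟨e1, e2⟩ := H.straight t h2t ht2 hturn
    rcases h2e : p (t+2) with ⟨w, z⟩
    rcases h3e : p (t-2) with ⟨w2, z2⟩
    simp only [disp, et, show t - 2 + 1 = t - 1 by omega, show t + 1 + 1 = t + 2 from rfl,
      hpt, h0e, h1e, h2e, h3e, Prod.mk.injEq] at e1 e2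
    have hg2 := H.grid (t-2) (by omega)
    rw [h3e] at hg2
    have hk6 : d + 6 ≤ k := by
      have : z2 = d + 5 := by omega
      have := hg2.2
      omega
    refine ⟨hk6,
      ⟨t-1, by omega, by omega, by rw [h0e]; exact Prod.ext (by omega) (by omega), Or.inr ⟨?_, ?_⟩⟩,
      ⟨t+1, by omega, by omega, by rw [h1e]; exact Prod.ext (by omega) (by omega), Or.inl ⟨?_, ?_⟩⟩⟩
    · rw [show t - 1 - 1 = t - 2 by omega, h3e]; exact Prod.ext (by omega) (by omega)
    · rw [et, hpt]
    · rw [show t + 1 - 1 = t from rfl, hpt]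
    · rw [show t + 1 + 1 = t + 2 from rfl, h2e]; exact Prod.ext (by omega) (by omega)
  · -- p (t-1) = (d+2,d+3), p (t+1) = (d+1,d+4)
    have hturn : disp p (t-1) ≠ disp p t := by
      intro hEq
      simp only [disp, et, hpt, h0e, h1e, Prod.mk.injEq] at hEq
      omega
    obtain ⟨e1, e2⟩ := H.straight t h2t ht2 hturn
    rcases h2e : p (t+2) with ⟨w, z⟩
    rcases h3e : p (t-2) with ⟨w2, z2⟩
    simp only [disp, et, show t - 2 + 1 = t - 1 by omega, show t + 1 + 1 = t + 2 from rfl,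
      hpt, h0e, h1e, h2e, h3e, Prod.mk.injEq] at e1 e2
    have hg2 := H.grid (t+2) (by omega)
    rw [h2e] at hg2
    have hk6 : d + 6 ≤ k := by
      have : z = d + 5 := by omega
      have := hg2.2
      omega
    refine ⟨hk6,
      ⟨t+1, by omega, by omega, by rw [h1e]; exact Prod.ext (by omega) (by omega), Or.inl ⟨?_, ?_⟩⟩,
      ⟨t-1, by omega, by omega, by rw [h0e]; exact Prod.ext (by omega) (by omega), Or.inr ⟨?_, ?_⟩⟩⟩
    · rw [show t + 1 - 1 = t from rfl, hpt]
    · rw [show t + 1 + 1 = t + 2 from rfl, h2e]; exact Prod.ext (by omega) (by omega)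
    · rw [show t - 1 - 1 = t - 2 by omega, h3e]; exact Prod.ext (by omega) (by omega)
    · rw [et, hpt]
  · exact absurd (⟨by omega, by omega⟩ : a = u ∧ b = v) hne

theorem main (H : HPHyp k p) : ∀ d, d + 5 ≤ k →
    Sat k p (d, d+3) (d, d+2) (d, d+4) ∧ Sat k p (d+1, d+2) (d, d+2) (d+2, d+2) := by
  intro d
  induction d with
  | zero => exact fun _ => ⟨H.base.2.1, H.base.2.2⟩
  | succ n ih =>
    intro h
    obtain ⟨s1, s2⟩ := ih (by omega)
    have hs := H.stepL n (by omega) s1 s2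
    exact ⟨hs.2.1, hs.2.2⟩

theorem final (H : HPHyp k p) : False := by
  obtain ⟨hk5, -, -⟩ := H.base
  obtain ⟨s1, s2⟩ := H.main (k-5) (by omega)
  have hs := H.stepL (k-5) (by omega) s1 s2
  have := hs.1
  omega

end HPHyp

/-- For `k ≥ 3`, there is no Hamiltonian path of edge-adjacent cells through the
`k × k` grid that starts `(0,0) → (0,1) → (1,1) → (2,1)` and never makes two turns at
consecutive steps. -/
theorem no_hamiltonian_path_without_consecutive_turns (k : ℕ) (hk : 3 ≤ k) :
    ¬ ∃ p : ℕ → ℕ × ℕ,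
      (∀ i < k ^ 2, (p i).1 < k ∧ (p i).2 < k) ∧
      (∀ i j, i < k ^ 2 → j < k ^ 2 → p i = p j → i = j) ∧
      (∀ q : ℕ × ℕ, q.1 < k → q.2 < k → ∃ i < k ^ 2, p i = q) ∧
      p 0 = (0, 0) ∧ p 1 = (0, 1) ∧ p 2 = (1, 1) ∧ p 3 = (2, 1) ∧
      (∀ i, i + 1 < k ^ 2 →
        ((disp p i).1.natAbs + (disp p i).2.natAbs = 1)) ∧
      (∀ j, 1 ≤ j → j + 2 < k ^ 2 →
        ¬(disp p (j - 1) ≠ disp p j ∧ disp p j ≠ disp p (j + 1))) := by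
  rintro ⟨p, hgrid, hinj, hsurj, h0, h1, h2, h3, hstep, hnoturn⟩
  exact HPHyp.final ⟨hgrid, hinj, hsurj, h0, h1, h2, h3, hstep, hnoturn, hk⟩
end
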